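/- Let n, m ≥ 1, let V ⊆ ℝⁿ be open, let h : V → ℝᵐ be harmonic with |h| ≤ M, |Dh| ≤ M and |D²h| ≤ M on V, and let η > 0. There exists ε₁ > 0, depending only on n, m, M and η, such that for every 0 < ε ≤ ε₁ the function H(x,z) := |ε^{-1} z − h(x)|² + η|x|² is a comparison function for the minimal surface system in the open set V × B_εᵐ. -/

import Mathlib

open Set Metric MeasureTheory

noncomputable section

/-- Euclidean space `ℝ^n`. -/
abbrev Euc (n : ℕ) : Type := EuclideanSpace ℝ (Fin n)

/-- The point `X = (x, z)` of `ℝ^{n+m}`. -/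
def pairPt (n m : ℕ) (x : Euc n) (z : Euc m) : Euc (n + m) :=
  WithLp.toLp 2 (fun i => Fin.addCases (motive := fun _ => ℝ) (fun j => x j) (fun j => z j) i)

/-- The `x`-part of a point `X ∈ ℝ^{n+m}`. -/
def xPart (n m : ℕ) (X : Euc (n + m)) : Euc n := WithLp.toLp 2 (fun i => X (Fin.castAdd m i))

/-- The `z`-part of a point `X ∈ ℝ^{n+m}`. -/
def zPart (n m : ℕ) (X : Euc (n + m)) : Euc m := WithLp.toLp 2 (fun i => X (Fin.natAdd n i))

/-- `H` is a comparison function for the minimal surface system in `U ⊆ ℝ^{n+m}`: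
`H` is `C²` on `U` and for every `X ∈ U` and every `n`-dimensional subspace `L`
orthogonal to `∇H(X)` (i.e. contained in the kernel of `DH(X)`), the Laplacian of `H`
along `L`, computed with any orthonormal basis of `L`, is positive. -/
def IsComparison (n m : ℕ) (U : Set (Euc (n + m))) (H : Euc (n + m) → ℝ) : Prop :=
  ContDiffOn ℝ 2 H U ∧
    ∀ X ∈ U, ∀ L : Submodule ℝ (Euc (n + m)), Module.finrank ℝ L = n →
      (∀ v ∈ L, fderivWithin ℝ H U X v = 0) →
      ∀ e : Fin n → Euc (n + m), (∀ k, e k ∈ L) → Orthonormal ℝ e →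
        0 < ∑ k, iteratedFDerivWithin ℝ 2 H U X ![e k, e k]

/-- `Γ` is a viscosity minimal set in the open set `W ⊆ ℝ^{n+m}`: for every open `U ⊆ W`,
every comparison function `H` in `U` and every `c`, there is no point of `Γ ∩ U` where
`H = c` while `Γ ∩ U ⊆ {H ≤ c}`. -/
def IsViscosityMinimalSet (n m : ℕ) (W : Set (Euc (n + m))) (Γ : Set (Euc (n + m))) : Prop :=
  ∀ U : Set (Euc (n + m)), U ⊆ W → IsOpen U →
    ∀ H : Euc (n + m) → ℝ, IsComparison n m U H → ∀ c : ℝ,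
      ¬ ∃ X₀ ∈ Γ ∩ U, H X₀ = c ∧ ∀ X ∈ Γ ∩ U, H X ≤ c

/-- The graph `{(x, u x) : x ∈ Ω} ⊆ ℝ^{n+m}` of `u : Ω → ℝ^m`. -/
def graphSet (n m : ℕ) (Ω : Set (Euc n)) (u : Euc n → Euc m) : Set (Euc (n + m)) :=
  (fun x => pairPt n m x (u x)) '' Ω

/-- `u : Ω → ℝ^m` is a viscosity solution of the minimal surface system. -/
def IsViscositySolution (n m : ℕ) (Ω : Set (Euc n)) (u : Euc n → Euc m) : Prop :=
  ContinuousOn u Ω ∧ IsViscosityMinimalSet n m univ (graphSet n m Ω u)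
/-- The area integrand `F(A) = √(det(Iₘ + AᵀA))` for an `n × m` matrix `A`. -/
def msF (n m : ℕ) (A : Matrix (Fin n) (Fin m) ℝ) : ℝ :=
  Real.sqrt (1 + Matrix.transpose A * A).det

/-- The second partial derivative `F_{αi,βj}` of `F` with respect to the entries
`A_{iα}` and `A_{jβ}`. -/
def msF2 (n m : ℕ) (A : Matrix (Fin n) (Fin m) ℝ) (i j : Fin n) (α β : Fin m) : ℝ :=
  deriv (fun s : ℝ => deriv (fun t : ℝ =>
    msF n m (A + t • Matrix.single i α 1 + s • Matrix.single j β 1)) 0) 0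

/-- The Jacobian matrix `Du(x) = (∂ᵢ u^α(x))`, computed within `Ω`. -/
def gradMat (n m : ℕ) (Ω : Set (Euc n)) (u : Euc n → Euc m) (x : Euc n) :
    Matrix (Fin n) (Fin m) ℝ :=
  fun i α => fderivWithin ℝ u Ω x (EuclideanSpace.single i 1) α

/-- The second partial derivative `∂ᵢ∂ⱼ u (x)`, computed within `Ω`. -/
def secondPartial (n m : ℕ) (Ω : Set (Euc n)) (u : Euc n → Euc m) (x : Euc n)
    (i j : Fin n) : Euc m :=
  iteratedFDerivWithin ℝ 2 u Ω x ![EuclideanSpace.single i 1, EuclideanSpace.single j 1]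

/-- `u` is a classical solution of the minimal surface system on `Ω`:
`∑_{i,j,β} F_{αi,βj}(Du(x)) ∂ᵢ∂ⱼ u^β(x) = 0` for all `x ∈ Ω` and all `α`. -/
def IsClassicalSolution (n m : ℕ) (Ω : Set (Euc n)) (u : Euc n → Euc m) : Prop :=
  ∀ x ∈ Ω, ∀ α : Fin m,
    ∑ i, ∑ j, ∑ β, msF2 n m (gradMat n m Ω u x) i j α β *
      secondPartial n m Ω u x i j β = 0

/-- The maximal Pucci operator `M⁺_{λ,Λ}(N) = Λ·∑_{μᵢ>0} μᵢ + λ·∑_{μᵢ<0} μᵢ`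
on symmetric matrices (where the `μᵢ` are the eigenvalues of `N`). -/
def pucciPlus {n : ℕ} (lam Lam : ℝ) (N : Matrix (Fin n) (Fin n) ℝ) : ℝ :=
  if h : N.IsHermitian then
    ∑ i, (if 0 < h.eigenvalues i then Lam * h.eigenvalues i else lam * h.eigenvalues i)
  else 0

/-- The Hessian matrix `D²φ(x)` of a scalar function, computed within `s`. -/
def hessWithin (n : ℕ) (s : Set (Euc n)) (φ : Euc n → ℝ) (x : Euc n) :
    Matrix (Fin n) (Fin n) ℝ :=
  fun i j =>
    iteratedFDerivWithin ℝ 2 φ s x ![EuclideanSpace.single i 1, EuclideanSpace.single j 1]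

/-- `‖φ‖_{C^{1,1}} ≤ 1` on `s`: `|φ| ≤ 1`, `|Dφ| ≤ 1` and `|D²φ| ≤ 1` on `s`. -/
def C11Bound (n : ℕ) (s : Set (Euc n)) (φ : Euc n → ℝ) : Prop :=
  (∀ x ∈ s, |φ x| ≤ 1) ∧ (∀ x ∈ s, ‖fderivWithin ℝ φ s x‖ ≤ 1) ∧
    (∀ x ∈ s, ‖iteratedFDerivWithin ℝ 2 φ s x‖ ≤ 1)

/-- The Laplacian `Δf(x) = ∑ᵢ ∂ᵢᵢ f(x)` of a scalar function, computed within `s`. -/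
def lapWithin (n : ℕ) (s : Set (Euc n)) (f : Euc n → ℝ) (x : Euc n) : ℝ :=
  ∑ i, iteratedFDerivWithin ℝ 2 f s x
    ![EuclideanSpace.single i 1, EuclideanSpace.single i 1]

/-- `h : V → ℝ^m` is harmonic on `V`: it is `C²` and `Δh^α = 0` on `V` for each `α`. -/
def HarmonicOnE (n m : ℕ) (V : Set (Euc n)) (h : Euc n → Euc m) : Prop :=
  ContDiffOn ℝ 2 h V ∧ ∀ x ∈ V, ∀ α : Fin m,
    ∑ i, (iteratedFDerivWithin ℝ 2 h V x
      ![EuclideanSpace.single i 1, EuclideanSpace.single i 1]) α = 0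

/-- The quadratic polynomial map `q : ℝⁿ → ℝᵐ` with constant part `c`, linear part `B`
and quadratic part `Q`, i.e. `q^α(x) = c^α + ∑ᵢ Bᵢα xᵢ + ∑ᵢⱼ Qαᵢⱼ xᵢ xⱼ`. -/
def quadMap (n m : ℕ) (c : Euc m) (B : Matrix (Fin n) (Fin m) ℝ)
    (Q : Fin m → Matrix (Fin n) (Fin n) ℝ) (x : Euc n) : Euc m :=
  WithLp.toLp 2 (fun α => c α + ∑ i, B i α * x i + ∑ i, ∑ j, Q α i j * x i * x j)

/-- The quadratic polynomial with quadratic part `Q` is harmonic, i.e. each quadratic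
part has zero trace. -/
def QuadHarmonic (n m : ℕ) (Q : Fin m → Matrix (Fin n) (Fin n) ℝ) : Prop :=
  ∀ α, ∑ i, Q α i i = 0

/-- All coefficients of the quadratic polynomial with data `(c, B, Q)` are bounded by `K`. -/
def QuadCoeffBound (n m : ℕ) (c : Euc m) (B : Matrix (Fin n) (Fin m) ℝ)
    (Q : Fin m → Matrix (Fin n) (Fin n) ℝ) (K : ℝ) : Prop :=
  (∀ α, |c α| ≤ K) ∧ (∀ i α, |B i α| ≤ K) ∧ (∀ α i j, |Q α i j| ≤ K)

/-- The oscillation of `w` on `s`: the infimum of radii `ρ ≥ 0` such that the image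
`w(s)` is contained in some ball `B_ρ(z)` of `ℝᵐ`. -/
def oscOn (n m : ℕ) (s : Set (Euc n)) (w : Euc n → Euc m) : ℝ :=
  sInf {ρ : ℝ | 0 ≤ ρ ∧ ∃ z : Euc m, ∀ x ∈ s, w x ∈ ball z ρ}

/-!
Along `v = (a, b) ∈ ℝⁿ × ℝᵐ` the Hessian of `H` at `X = (x, z)` is
`2 |ε⁻¹ b - Dh(x) a|² + 2η |a|² - 2 ⟪w, D²h(x)(a, a)⟫` with `w = ε⁻¹ z - h(x)`, `|w| ≤ 1 + M`.
For an orthonormal `n`-frame `(a_k, b_k)` the bad terms add up to `D²h(x)` paired with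
`∑ a_k a_kᵀ`. Complete the frame to an orthonormal basis of `ℝⁿ⁺ᵐ`: since `D²h(x)` is trace free,
the sum over the frame is minus the sum over the complementary vectors, whose horizontal parts
have total squared length `∑ |b_k|²`, so the bad terms are at most `2M(1 + M) ∑ |b_k|²`.
Each frame vector contributes at least `η` to the rest: if `|b_k|` is large compared with `ε`
the term `ε⁻²|b_k|²` wins, otherwise `|a_k| ≈ 1` and the term `2η |a_k|²` wins.
-/

open InnerProductSpace TensorProduct RealInnerProductSpace Filter Topology

section OrthonormalFrames

variable {E F G : Type*} [NormedAddCommGroup E] [InnerProductSpace ℝ E] [FiniteDimensional ℝ E]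
  [NormedAddCommGroup F] [NormedSpace ℝ F] [NormedAddCommGroup G] [InnerProductSpace ℝ G]

theorem sum_apply_orthonormalBasis_eq {ι κ : Type*} [Fintype ι] [Fintype κ]
    (B : E →ₗ[ℝ] E →ₗ[ℝ] F) (b : OrthonormalBasis ι ℝ E) (c : OrthonormalBasis κ ℝ E) :
    ∑ i, B (b i) (b i) = ∑ j, B (c j) (c j) := by
  have hb := congrArg (lift B) (canonicalCovariantTensor_eq_sum E b)
  have hc := congrArg (lift B) (canonicalCovariantTensor_eq_sum E c)
  simp only [map_sum, lift.tmul] at hb hc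
  rw [← hb, hc]

theorem Orthonormal.exists_orthonormalBasis_sumElim {ι : Type*} [Fintype ι] {e : ι → E}
    (he : Orthonormal ℝ e) :
    ∃ b : OrthonormalBasis (ι ⊕ Fin (Module.finrank ℝ E - Fintype.card ι)) ℝ E,
      ∀ k, b (Sum.inl k) = e k := by
  classical
  let κ := Fin (Module.finrank ℝ E - Fintype.card ι)
  have hcard : Module.finrank ℝ E = Fintype.card (ι ⊕ κ) := by
    have := he.linearIndependent.fintype_card_le_finrank
    simp only [κ, Fintype.card_sum, Fintype.card_fin]
    omega
  have hv : Orthonormal ℝ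
      ((Set.range (Sum.inl : ι → ι ⊕ κ)).domRestrict (Sum.elim e 0 : ι ⊕ κ → E)) := by
    rw [orthonormal_iff_ite] at he ⊢
    rintro ⟨_, k, rfl⟩ ⟨_, l, rfl⟩
    simpa [Subtype.ext_iff] using he k l
  obtain ⟨b, hb⟩ := Orthonormal.exists_orthonormalBasis_extension_of_card_eq hcard hv
  exact ⟨b, fun k => hb _ ⟨k, rfl⟩⟩

/-- Complete `e` to an orthonormal basis: by the trace condition the sum over `e` is minus the
sum over the added vectors `f_j`, and `∑ ‖P f_j‖²` is the bracket on the right. -/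
theorem norm_sum_apply_orthonormal_le {ι κ : Type*} [Fintype ι] [Fintype κ]
    {D : G →ₗ[ℝ] G →ₗ[ℝ] F} {K : ℝ} (hD : ∀ y, ‖D y y‖ ≤ K * ‖y‖ ^ 2) (P : E →ₗ[ℝ] G)
    (b : OrthonormalBasis κ ℝ E) (htr : ∑ i, D (P (b i)) (P (b i)) = 0)
    {e : ι → E} (he : Orthonormal ℝ e) :
    ‖∑ k, D (P (e k)) (P (e k))‖ ≤ K * (∑ i, ‖P (b i)‖ ^ 2 - ∑ k, ‖P (e k)‖ ^ 2) := by
  obtain ⟨c, hc⟩ := he.exists_orthonormalBasis_sumElim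
  have hD_split := sum_apply_orthonormalBasis_eq (D.compl₁₂ P P) b c
  have hP_split := sum_apply_orthonormalBasis_eq ((innerₗ G).compl₁₂ P P) b c
  simp only [LinearMap.compl₁₂_apply, innerₗ_apply_apply, real_inner_self_eq_norm_sq,
    Fintype.sum_sum_type, hc] at hD_split hP_split
  rw [htr, eq_comm, add_eq_zero_iff_eq_neg] at hD_split
  rw [hD_split, norm_neg, hP_split, add_sub_cancel_left, Finset.mul_sum]
  exact (norm_sum_le _ _).trans (Finset.sum_le_sum fun j _ => hD _)

end OrthonormalFrames

section SecondDerivatives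

variable {E F G : Type*} [NormedAddCommGroup E] [NormedSpace ℝ E]
  [NormedAddCommGroup F] [InnerProductSpace ℝ F] [NormedAddCommGroup G] [InnerProductSpace ℝ G]

theorem iteratedFDeriv_two_norm_sq_apply {g : E → F} {x : E} (hg : ContDiffAt ℝ 2 g x)
    (v w : E) :
    iteratedFDeriv ℝ 2 (fun y => ‖g y‖ ^ 2) x ![v, w] =
      2 * (⟪fderiv ℝ g x v, fderiv ℝ g x w⟫ + ⟪g x, iteratedFDeriv ℝ 2 g x ![v, w]⟫) := by
  have hg₁ : ∀ᶠ y in 𝓝 x, HasFDerivAt g (fderiv ℝ g y) y :=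
    (hg.eventually (by simp)).mono fun y hy => (hy.differentiableAt (by norm_num)).hasFDerivAt
  have hg₂ : HasFDerivAt (fderiv ℝ g) (fderiv ℝ (fderiv ℝ g) x) x :=
    ((hg.fderiv_right (m := 1) le_rfl).differentiableAt one_ne_zero).hasFDerivAt
  have hfd : fderiv ℝ (fun y => ‖g y‖ ^ 2) =ᶠ[𝓝 x]
      fun y => 2 • (innerSL ℝ (g y)).comp (fderiv ℝ g y) :=
    hg₁.mono fun y hy => hy.norm_sq.fderiv
  have hH : HasFDerivAt (fun y => 2 • (innerSL ℝ (g y)).comp (fderiv ℝ g y)) _ x :=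
    (((innerSL ℝ).hasFDerivAt.comp x hg₁.self_of_nhds).clm_comp hg₂).const_smul 2
  rw [iteratedFDeriv_two_apply, iteratedFDeriv_two_apply, hfd.fderiv_eq, hH.fderiv]
  simp only [Fin.isValue, Matrix.cons_val_zero, Matrix.cons_val_one, Matrix.cons_val_fin_one,
    FunLike.coe_smul, Pi.smul_apply, add_apply, ContinuousLinearMap.coe_comp,
    Function.comp_apply, ContinuousLinearMap.compL_apply, ContinuousLinearMap.flip_apply,
    nsmul_eq_mul]
  rw [innerSL_apply_apply, innerSL_apply_apply]
  ring

theorem iteratedFDeriv_two_continuousLinearMap (A : E →L[ℝ] F) (x : E) :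
    iteratedFDeriv ℝ 2 A x = 0 := by
  have : fderiv ℝ A = fun _ => A := funext fun _ => A.fderiv
  ext v
  simp [iteratedFDeriv_two_apply, this]

theorem fderiv_sub_comp (A : E →L[ℝ] F) (P : E →L[ℝ] G) {h : G → F} {x : E}
    (hh : DifferentiableAt ℝ h (P x)) :
    fderiv ℝ (fun y => A y - h (P y)) x = A - (fderiv ℝ h (P x)).comp P :=
  (A.hasFDerivAt.sub (hh.hasFDerivAt.comp x P.hasFDerivAt)).fderiv

theorem iteratedFDeriv_two_sub_comp_apply (A : E →L[ℝ] F) (P : E →L[ℝ] G) {h : G → F}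
    {x : E} (hh : ContDiffAt ℝ 2 h (P x)) (v w : E) :
    iteratedFDeriv ℝ 2 (fun y => A y - h (P y)) x ![v, w] =
      -iteratedFDeriv ℝ 2 h (P x) ![P v, P w] := by
  have hev : fderiv ℝ (fun y => A y - h (P y)) =ᶠ[𝓝 x]
      fun y => A - (fderiv ℝ h (P y)).comp P :=
    ((P.continuous.tendsto x).eventually (hh.eventually (by simp))).mono
      fun y hy => fderiv_sub_comp A P (hy.differentiableAt (by norm_num))
  have hD₂ : HasFDerivAt (fderiv ℝ h) (fderiv ℝ (fderiv ℝ h) (P x)) (P x) :=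
    ((hh.fderiv_right (m := 1) le_rfl).differentiableAt one_ne_zero).hasFDerivAt
  have hD : HasFDerivAt (fun y => A - (fderiv ℝ h (P y)).comp P) _ x :=
    (hasFDerivAt_const A x).sub ((hD₂.comp x P.hasFDerivAt).clm_comp (hasFDerivAt_const P x))
  rw [iteratedFDeriv_two_apply, iteratedFDeriv_two_apply, hev.fderiv_eq, hD.fderiv]
  simp

theorem iteratedFDeriv_two_comparison_apply (A : E →L[ℝ] F) (P : E →L[ℝ] G) {h : G → F}
    {x : E} (hh : ContDiffAt ℝ 2 h (P x)) (η : ℝ) (v : E) :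
    iteratedFDeriv ℝ 2 (fun y => ‖A y - h (P y)‖ ^ 2 + η * ‖P y‖ ^ 2) x ![v, v] =
      2 * ‖A v - fderiv ℝ h (P x) (P v)‖ ^ 2
        - 2 * ⟪A x - h (P x), iteratedFDeriv ℝ 2 h (P x) ![P v, P v]⟫ + 2 * η * ‖P v‖ ^ 2 := by
  have hg : ContDiffAt ℝ 2 (fun y => A y - h (P y)) x :=
    A.contDiff.contDiffAt.sub (hh.comp x P.contDiff.contDiffAt)
  have hP : ContDiffAt ℝ 2 P x := P.contDiff.contDiffAt
  have hsmul : (fun y => η * ‖P y‖ ^ 2) = η • fun y => ‖P y‖ ^ 2 := rfl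
  rw [fun_iteratedFDeriv_add_apply (hg.norm_sq ℝ) (contDiffAt_const.mul (hP.norm_sq ℝ)), hsmul,
    iteratedFDeriv_const_smul_apply (hP.norm_sq ℝ)]
  simp only [add_apply, smul_apply, iteratedFDeriv_two_norm_sq_apply hg,
    iteratedFDeriv_two_norm_sq_apply hP, iteratedFDeriv_two_sub_comp_apply A P hh,
    fderiv_sub_comp A P (hh.differentiableAt (by norm_num)), P.fderiv,
    iteratedFDeriv_two_continuousLinearMap, real_inner_self_eq_norm_sq, sub_apply,
    ContinuousLinearMap.comp_apply, inner_neg_right, zero_apply, inner_zero_right, add_zero,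
    smul_eq_mul]
  ring

end SecondDerivatives

theorem frame_term_lower_bound {a b r ε η M C : ℝ} (hε : 0 < ε) (hη : 0 < η) (hb : 0 ≤ b)
    (hab : a ^ 2 + b ^ 2 = 1) (hr : ε⁻¹ * b - M * a ≤ r)
    (hsmall : ε ^ 2 * ((C + η) * (η + 2 * M ^ 2)) ≤ 2 * η) :
    η ≤ 2 * r ^ 2 + 2 * η * a ^ 2 - C * b ^ 2 := by
  set p := ε⁻¹ * b
  have hp : 0 ≤ p := by positivity
  have hbp : b = ε * p := by
    simp only [p]
    field_simp
  have hK : 0 < η + 2 * M ^ 2 := by positivity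
  -- Young's inequality, weighted so that the `M a` part costs only `η a² / 2`
  have hyoung :
      2 * η * p ^ 2 - η * (η + 2 * M ^ 2) * a ^ 2 ≤ (η + 2 * M ^ 2) * (2 * r ^ 2) := by
    rcases le_or_gt (p - M * a) 0 with hle | hlt
    · have : p ^ 2 ≤ (M * a) ^ 2 := pow_le_pow_left₀ hp (by linarith) 2
      nlinarith [mul_le_mul_of_nonneg_left this (by positivity : (0 : ℝ) ≤ 2 * η),
        sq_nonneg (η * a), mul_nonneg hK.le (sq_nonneg r)]
    · have : (p - M * a) ^ 2 ≤ r ^ 2 := pow_le_pow_left₀ hlt.le hr 2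
      nlinarith [sq_nonneg (2 * M * p - (η + 2 * M ^ 2) * a)]
  have hpb : (C + η) * (η + 2 * M ^ 2) * b ^ 2 ≤ 2 * η * p ^ 2 := by
    rw [hbp]
    nlinarith [sq_nonneg p]
  have : (C + η) * b ^ 2 - η * a ^ 2 ≤ 2 * r ^ 2 := by
    refine le_of_mul_le_mul_left ?_ hK
    nlinarith
  nlinarith

theorem frame_vector_lower_bound {E F : Type*} [NormedAddCommGroup E] [NormedSpace ℝ E]
    [NormedAddCommGroup F] [NormedSpace ℝ F] {a : E} {b : F} {L : E →L[ℝ] F} {ε η M C : ℝ}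
    (hε : 0 < ε) (hη : 0 < η) (hL : ‖L‖ ≤ M) (hab : ‖a‖ ^ 2 + ‖b‖ ^ 2 = 1)
    (hsmall : ε ^ 2 * ((C + η) * (η + 2 * M ^ 2)) ≤ 2 * η) :
    η ≤ 2 * ‖ε⁻¹ • b - L a‖ ^ 2 + 2 * η * ‖a‖ ^ 2 - C * ‖b‖ ^ 2 := by
  refine frame_term_lower_bound hε hη (norm_nonneg b) hab ?_ hsmall
  have hLa : ‖L a‖ ≤ M * ‖a‖ := (L.le_opNorm a).trans (by gcongr)
  have := norm_sub_norm_le (ε⁻¹ • b) (L a)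
  rw [norm_smul, Real.norm_of_nonneg (by positivity)] at this
  linarith

section Coordinates

variable (n m : ℕ)

def xPartL : Euc (n + m) →L[ℝ] Euc n :=
  LinearMap.toContinuousLinearMap
    { toFun := xPart n m
      map_add' := fun _ _ => rfl
      map_smul' := fun _ _ => rfl }

def zPartL : Euc (n + m) →L[ℝ] Euc m :=
  LinearMap.toContinuousLinearMap
    { toFun := zPart n m
      map_add' := fun _ _ => rfl
      map_smul' := fun _ _ => rfl }

@[simp] theorem xPartL_apply (X : Euc (n + m)) : xPartL n m X = xPart n m X := rfl

theorem norm_xPart_sq_add_norm_zPart_sq (X : Euc (n + m)) :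
    ‖xPart n m X‖ ^ 2 + ‖zPart n m X‖ ^ 2 = ‖X‖ ^ 2 := by
  simp only [EuclideanSpace.norm_sq_eq, Fin.sum_univ_add]
  rfl

theorem sum_apply_xPart_single {F : Type*} [AddCommMonoid F] [Module ℝ F]
    (B : Euc n →ₗ[ℝ] Euc n →ₗ[ℝ] F) :
    ∑ i, B (xPart n m (EuclideanSpace.single i 1)) (xPart n m (EuclideanSpace.single i 1)) =
      ∑ k, B (EuclideanSpace.single k 1) (EuclideanSpace.single k 1) := by
  have hcast : ∀ k, xPart n m (EuclideanSpace.single (Fin.castAdd m k) 1) =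
      EuclideanSpace.single k 1 := by
    intro k
    ext j
    simp [xPart]
  have hnat : ∀ j, xPart n m (EuclideanSpace.single (Fin.natAdd n j) 1) = 0 := by
    intro j
    ext k
    simp only [xPart, PiLp.single_apply, Fin.ext_iff, Fin.val_castAdd, Fin.val_natAdd,
      PiLp.zero_apply, ite_eq_right_iff, one_ne_zero, imp_false]
    omega
  simp [Fin.sum_univ_add, hcast, hnat]

theorem norm_sum_iteratedFDeriv_xPart_le {F : Type*} [NormedAddCommGroup F] [NormedSpace ℝ F]
    {h : Euc n → F} {x : Euc n}
    (hΔ : ∑ k, iteratedFDeriv ℝ 2 h x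
      ![EuclideanSpace.single k 1, EuclideanSpace.single k 1] = 0)
    {e : Fin n → Euc (n + m)} (he : Orthonormal ℝ e) :
    ‖∑ k, iteratedFDeriv ℝ 2 h x ![xPart n m (e k), xPart n m (e k)]‖ ≤
      ‖iteratedFDeriv ℝ 2 h x‖ * ∑ k, ‖zPart n m (e k)‖ ^ 2 := by
  have hD : ∀ y, ‖bilinearIteratedFDerivTwo ℝ h x y y‖ ≤
      ‖iteratedFDeriv ℝ 2 h x‖ * ‖y‖ ^ 2 := by
    intro y
    rw [bilinearIteratedFDerivTwo_eq_iteratedFDeriv]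
    simpa [Fin.prod_univ_two, sq] using (iteratedFDeriv ℝ 2 h x).le_opNorm ![y, y]
  have key := norm_sum_apply_orthonormal_le hD (xPartL n m).toLinearMap
    (EuclideanSpace.basisFun (Fin (n + m)) ℝ)
    (by simpa [bilinearIteratedFDerivTwo_eq_iteratedFDeriv, hΔ] using
      sum_apply_xPart_single n m (bilinearIteratedFDerivTwo ℝ h x)) he
  have hbasis := sum_apply_xPart_single n m (innerₗ (Euc n))
  simp only [innerₗ_apply_apply, real_inner_self_eq_norm_sq, PiLp.norm_single,
    norm_one, one_pow, Finset.sum_const, Finset.card_univ, Fintype.card_fin, nsmul_eq_mul,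
    mul_one] at hbasis
  have hframe : ∀ k, ‖xPart n m (e k)‖ ^ 2 = 1 - ‖zPart n m (e k)‖ ^ 2 := fun k => by
    have := norm_xPart_sq_add_norm_zPart_sq n m (e k)
    rw [he.1 k, one_pow] at this
    linarith
  simp only [ContinuousLinearMap.coe_coe, xPartL_apply, EuclideanSpace.basisFun_apply,
    bilinearIteratedFDerivTwo_eq_iteratedFDeriv, hbasis, hframe, Finset.sum_sub_distrib] at key
  simpa using key

end Coordinates

theorem HarmonicOnE.sum_iteratedFDeriv_eq_zero {n m : ℕ} {V : Set (Euc n)} {h : Euc n → Euc m}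
    (hh : HarmonicOnE n m V h) (hV : IsOpen V) {x : Euc n} (hx : x ∈ V) :
    ∑ k, iteratedFDeriv ℝ 2 h x ![EuclideanSpace.single k 1, EuclideanSpace.single k 1] = 0 := by
  ext α
  simpa [iteratedFDerivWithin_of_isOpen 2 hV hx] using hh.2 x hx α

theorem sum_iteratedFDeriv_comparison_pos {n m : ℕ} (hn : 1 ≤ n) {M η ε : ℝ} (hM : 0 ≤ M)
    (hη : 0 < η) (hε : 0 < ε)
    (hsmall : ε ^ 2 * ((2 * M * (1 + M) + η) * (η + 2 * M ^ 2)) ≤ 2 * η)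
    {h : Euc n → Euc m} {X : Euc (n + m)} (hh : ContDiffAt ℝ 2 h (xPart n m X))
    (hΔ : ∑ k, iteratedFDeriv ℝ 2 h (xPart n m X)
      ![EuclideanSpace.single k 1, EuclideanSpace.single k 1] = 0)
    (h₀ : ‖h (xPart n m X)‖ ≤ M) (h₁ : ‖fderiv ℝ h (xPart n m X)‖ ≤ M)
    (h₂ : ‖iteratedFDeriv ℝ 2 h (xPart n m X)‖ ≤ M) (hz : ‖zPart n m X‖ < ε)
    {e : Fin n → Euc (n + m)} (he : Orthonormal ℝ e) :
    0 < ∑ k, iteratedFDeriv ℝ 2 (fun Y => ‖ε⁻¹ • zPart n m Y - h (xPart n m Y)‖ ^ 2 +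
      η * ‖xPart n m Y‖ ^ 2) X ![e k, e k] := by
  set x := xPart n m X
  set w := ε⁻¹ • zPart n m X - h x
  set C := 2 * M * (1 + M)
  set W : Euc (n + m) → Euc m := fun v => ε⁻¹ • zPart n m v - fderiv ℝ h x (xPart n m v)
  have hw : ‖w‖ ≤ 1 + M := by
    refine (norm_sub_le _ _).trans (add_le_add ?_ h₀)
    rw [norm_smul, Real.norm_of_nonneg (by positivity), inv_mul_le_one₀ hε]
    exact hz.le
  have hbad : 2 * ⟪w, ∑ k, iteratedFDeriv ℝ 2 h x ![xPart n m (e k), xPart n m (e k)]⟫ ≤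
      ∑ k, C * ‖zPart n m (e k)‖ ^ 2 := by
    rw [← Finset.mul_sum]
    calc _ ≤ 2 * (‖w‖ * (M * ∑ k, ‖zPart n m (e k)‖ ^ 2)) := by
          gcongr
          refine (real_inner_le_norm _ _).trans (mul_le_mul_of_nonneg_left ?_ (norm_nonneg _))
          exact (norm_sum_iteratedFDeriv_xPart_le n m hΔ he).trans (by gcongr)
      _ ≤ 2 * ((1 + M) * (M * ∑ k, ‖zPart n m (e k)‖ ^ 2)) := by gcongr
      _ = C * ∑ k, ‖zPart n m (e k)‖ ^ 2 := by ring
  have hgood : ∀ k, η ≤ 2 * ‖W (e k)‖ ^ 2 + 2 * η * ‖xPart n m (e k)‖ ^ 2 -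
      C * ‖zPart n m (e k)‖ ^ 2 := fun k =>
    frame_vector_lower_bound hε hη h₁
      (by rw [norm_xPart_sq_add_norm_zPart_sq, he.1 k, one_pow]) hsmall
  have hhess : ∀ v, iteratedFDeriv ℝ 2 (fun Y => ‖ε⁻¹ • zPart n m Y - h (xPart n m Y)‖ ^ 2 +
      η * ‖xPart n m Y‖ ^ 2) X ![v, v] = 2 * ‖W v‖ ^ 2
        - 2 * ⟪w, iteratedFDeriv ℝ 2 h x ![xPart n m v, xPart n m v]⟫ +
          2 * η * ‖xPart n m v‖ ^ 2 :=
    iteratedFDeriv_two_comparison_apply (ε⁻¹ • zPartL n m) (xPartL n m) hh η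
  have hnη : (0 : ℝ) < ∑ _k : Fin n, η := by
    rw [Finset.sum_const, Finset.card_univ, Fintype.card_fin, nsmul_eq_mul]
    exact mul_pos (by exact_mod_cast hn) hη
  have hsum := Finset.sum_le_sum fun k (_ : k ∈ Finset.univ) => hgood k
  simp only [hhess, inner_sum, Finset.mul_sum] at hbad ⊢
  simp only [Finset.sum_add_distrib, Finset.sum_sub_distrib] at hbad hsum ⊢
  linarith

theorem comparison_from_harmonic_general (n m : ℕ) (hn : 1 ≤ n)
    (M : ℝ) (hM : 0 < M) (η : ℝ) (hη : 0 < η) :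
    ∃ ε₁ > (0 : ℝ), ∀ V : Set (Euc n), IsOpen V →
      ∀ h : Euc n → Euc m, HarmonicOnE n m V h →
        (∀ x ∈ V, ‖h x‖ ≤ M) → (∀ x ∈ V, ‖fderivWithin ℝ h V x‖ ≤ M) →
        (∀ x ∈ V, ‖iteratedFDerivWithin ℝ 2 h V x‖ ≤ M) →
      ∀ ε : ℝ, 0 < ε → ε ≤ ε₁ →
        IsComparison n m
          {X : Euc (n + m) | xPart n m X ∈ V ∧ zPart n m X ∈ ball 0 ε}
          (fun X => ‖ε⁻¹ • zPart n m X - h (xPart n m X)‖ ^ 2 +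
            η * ‖xPart n m X‖ ^ 2) := by
  set K := (2 * M * (1 + M) + η) * (η + 2 * M ^ 2)
  have hK : 0 < K := by positivity
  refine ⟨√(2 * η / K), by positivity, fun V hV h hh h₀ h₁ h₂ ε hε hεε₁ => ?_⟩
  have hsmall : ε ^ 2 * K ≤ 2 * η := by
    rw [← le_div_iff₀ hK]
    exact (Real.le_sqrt hε.le (by positivity)).mp hεε₁
  have hU : IsOpen {X : Euc (n + m) | xPart n m X ∈ V ∧ zPart n m X ∈ ball 0 ε} :=
    ((xPartL n m).continuous.isOpen_preimage V hV).inter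
      ((zPartL n m).continuous.isOpen_preimage _ isOpen_ball)
  refine ⟨?_, fun X hX L _ _ e _ he => ?_⟩
  · exact (((zPartL n m).contDiff.const_smul ε⁻¹).contDiffOn.sub
      (hh.1.comp (xPartL n m).contDiff.contDiffOn fun X hX => hX.1)).norm_sq ℝ |>.add
      (contDiffOn_const.mul ((xPartL n m).contDiff.contDiffOn.norm_sq ℝ))
  · have hx : xPart n m X ∈ V := hX.1
    have h₁x := h₁ _ hx
    have h₂x := h₂ _ hx
    rw [fderivWithin_of_isOpen hV hx] at h₁x
    rw [iteratedFDerivWithin_of_isOpen 2 hV hx] at h₂x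
    simp only [iteratedFDerivWithin_of_isOpen 2 hU hX]
    exact sum_iteratedFDeriv_comparison_pos hn hM.le hη hε hsmall
      (hh.1.contDiffAt (hV.mem_nhds hx)) (hh.sum_iteratedFDeriv_eq_zero hV hx) (h₀ _ hx) h₁x
      h₂x (mem_ball_zero_iff.mp hX.2) he

/-- **Comparison functions from harmonic maps.** For every `n, m ≥ 1`, `M > 0`, `η > 0`
there is `ε₁ > 0` depending only on `n, m, M, η` such that for every open `V ⊆ ℝⁿ`, every
harmonic `h : V → ℝᵐ` with `|h| ≤ M`, `|Dh| ≤ M`, `|D²h| ≤ M` on `V`, and every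
`0 < ε ≤ ε₁`, the function `H(x,z) = |ε⁻¹ z − h(x)|² + η|x|²` is a comparison function for
the minimal surface system in `V × B_εᵐ`. -/
theorem comparison_from_harmonic (n m : ℕ) (hn : 1 ≤ n) (hm : 1 ≤ m)
    (M : ℝ) (hM : 0 < M) (η : ℝ) (hη : 0 < η) :
    ∃ ε₁ > (0 : ℝ), ∀ V : Set (Euc n), IsOpen V →
      ∀ h : Euc n → Euc m, HarmonicOnE n m V h →
        (∀ x ∈ V, ‖h x‖ ≤ M) → (∀ x ∈ V, ‖fderivWithin ℝ h V x‖ ≤ M) →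
        (∀ x ∈ V, ‖iteratedFDerivWithin ℝ 2 h V x‖ ≤ M) →
      ∀ ε : ℝ, 0 < ε → ε ≤ ε₁ →
        IsComparison n m
          {X : Euc (n + m) | xPart n m X ∈ V ∧ zPart n m X ∈ ball 0 ε}
          (fun X => ‖ε⁻¹ • zPart n m X - h (xPart n m X)‖ ^ 2 +
            η * ‖xPart n m X‖ ^ 2) :=
  comparison_from_harmonic_general n m hn M hM η hη
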